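/- Optimality at infinity via oscillation, 1D model case: for any λ > 1, a > 0, and ε ∈ (0, 2/a), the equation -y'' = λ (2t - at²)^{-2} y admits a solution on (0, ε) with infinitely many zeros accumulating at 0; consequently no positive solution exists on (0, ε). -/

import Mathlib

/-!
Write `λ = 1 + ξ²`. The function `u(t) = √(2t - at²) cos θ(t)` with phase
`θ(t) = (ξ/2) log (t / (2 - at))` solves the equation, and `θ → -∞` as `t → 0⁺`, so near `0`
the phase passes through every residue mod `2π`: `u` has zeros accumulating at `0`, with
`u' < 0` at some and `u' > 0` at others. If `y > 0` solved the equation near `0`, its Wronskian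
`u y' - u' y` with `u` would be `-u'(t₁) y(t₁) > 0` at one such zero and `-u'(t₂) y(t₂) < 0` at
another, contradicting its constancy.
-/

open Real Set Filter Topology

section Sturm

variable {u u' y y' q : ℝ → ℝ} {s : Set ℝ} {t₁ t₂ : ℝ}

lemma wronskian_eq_of_hasDerivAt (hs : IsOpen s) (hs' : IsPreconnected s)
    (hu : ∀ t ∈ s, HasDerivAt u (u' t) t) (hu' : ∀ t ∈ s, HasDerivAt u' (-(q t * u t)) t)
    (hy : ∀ t ∈ s, HasDerivAt y (y' t) t) (hy' : ∀ t ∈ s, HasDerivAt y' (-(q t * y t)) t)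
    (h₁ : t₁ ∈ s) (h₂ : t₂ ∈ s) :
    u t₁ * y' t₁ - u' t₁ * y t₁ = u t₂ * y' t₂ - u' t₂ * y t₂ := by
  have hW : ∀ t ∈ s, HasDerivAt (fun t => u t * y' t - u' t * y t) 0 t := fun t ht =>
    (((hu t ht).mul (hy' t ht)).sub ((hu' t ht).mul (hy t ht))).congr_deriv (by ring)
  exact hs.is_const_of_deriv_eq_zero hs'
    (fun t ht => (hW t ht).differentiableAt.differentiableWithinAt) (fun t ht => (hW t ht).deriv)
    h₁ h₂

lemma sturm_nonpos_of_pos (hs : IsOpen s) (hs' : IsPreconnected s)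
    (hu : ∀ t ∈ s, HasDerivAt u (u' t) t) (hu' : ∀ t ∈ s, HasDerivAt u' (-(q t * u t)) t)
    (hy : ∀ t ∈ s, HasDerivAt y (y' t) t) (hy' : ∀ t ∈ s, HasDerivAt y' (-(q t * y t)) t)
    (h₁ : t₁ ∈ s) (h₂ : t₂ ∈ s) (hu₁ : u t₁ = 0) (hu₂ : u t₂ = 0)
    (hu'₁ : u' t₁ < 0) (hu'₂ : 0 < u' t₂) (hy₁ : 0 < y t₁) : y t₂ ≤ 0 := by
  have hW := wronskian_eq_of_hasDerivAt hs hs' hu hu' hy hy' h₁ h₂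
  rw [hu₁, hu₂] at hW
  by_contra! hy₂
  nlinarith [mul_pos (neg_pos.2 hu'₁) hy₁, mul_pos hu'₂ hy₂]

end Sturm

lemma exists_forall_differentiableAt_of_deriv_deriv_neg {f : ℝ → ℝ} {a b : ℝ} (hab : a < b)
    (hf : ∀ t ∈ Ioo a b, deriv (deriv f) t < 0) :
    ∃ c ∈ Ioc a b, ∀ t ∈ Ioo a c, DifferentiableAt ℝ f t := by
  have hanti : StrictAntiOn (deriv f) (Ioo a b) :=
    strictAntiOn_of_deriv_neg (convex_Ioo a b)
      (fun t ht => (differentiableAt_of_deriv_ne_zero (hf t ht).ne).continuousAt.continuousWithinAt)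
      (by rwa [interior_Ioo])
  by_cases h : ∃ p ∈ Ioo a b, ¬DifferentiableAt ℝ f p
  · obtain ⟨p, hp, hnp⟩ := h
    refine ⟨p, ⟨hp.1, hp.2.le⟩, fun t ht => by_contra fun hnt => ht.2.ne ?_⟩
    -- `deriv f` is injective and takes the junk value `0` at every point where `f` is not
    -- differentiable, so there is at most one such point.
    refine hanti.injOn ⟨ht.1, ht.2.trans hp.2⟩ hp ?_
    rw [deriv_zero_of_not_differentiableAt hnt, deriv_zero_of_not_differentiableAt hnp]
  · push Not at h
    exact ⟨b, ⟨hab, le_rfl⟩, h⟩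

section Winding

variable {f : ℝ → ℝ} {a b : ℝ}

lemma exists_mem_Ioo_eq_of_tendsto_atBot (hab : a < b) (hf : ContinuousOn f (Ioc a b))
    (hlim : Tendsto f (𝓝[>] a) atBot) {c : ℝ} (hc : c < f b) : ∃ t ∈ Ioo a b, f t = c := by
  obtain ⟨t₀, hft₀, ht₀⟩ :=
    ((hlim.eventually (eventually_lt_atBot c)).and (Ioo_mem_nhdsGT hab)).exists
  obtain ⟨t, ht, rfl⟩ :=
    intermediate_value_Ioo ht₀.2.le (hf.mono (Icc_subset_Ioc ht₀.1 le_rfl)) ⟨hft₀, hc⟩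
  exact ⟨t, ⟨ht₀.1.trans ht.1, ht.2⟩, rfl⟩

lemma exists_mem_Ioo_cos_sin_eq_of_tendsto_atBot (hab : a < b) (hf : ContinuousOn f (Ioc a b))
    (hlim : Tendsto f (𝓝[>] a) atBot) (x : ℝ) :
    ∃ t ∈ Ioo a b, cos (f t) = cos x ∧ sin (f t) = sin x := by
  obtain ⟨k, hk⟩ := exists_int_lt ((f b - x) / (2 * π))
  rw [lt_div_iff₀ (by positivity)] at hk
  obtain ⟨t, ht, hft⟩ :=
    exists_mem_Ioo_eq_of_tendsto_atBot hab hf hlim (c := x + k * (2 * π)) (by linarith)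
  exact ⟨t, ht, by rw [hft, cos_add_int_mul_two_pi], by rw [hft, sin_add_int_mul_two_pi]⟩

end Winding

noncomputable def modelPhase (a ξ t : ℝ) : ℝ := ξ / 2 * (log t - log (2 - a * t))

noncomputable def modelSol (a ξ t : ℝ) : ℝ := √(2 * t - a * t ^ 2) * cos (modelPhase a ξ t)

noncomputable def modelSolDeriv (a ξ t : ℝ) : ℝ :=
  (√(2 * t - a * t ^ 2))⁻¹ * ((1 - a * t) * cos (modelPhase a ξ t) - ξ * sin (modelPhase a ξ t))

section Model

variable {a ξ t δ : ℝ}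

lemma two_mul_sub_mul_sq_pos (ha : 0 < a) (ht : t ∈ Ioo 0 (2 / a)) : 0 < 2 * t - a * t ^ 2 := by
  have : a * t < 2 := by have := ht.2; rwa [lt_div_iff₀ ha, mul_comm] at this
  nlinarith [ht.1]

lemma hasDerivAt_modelPhase (hr : 2 * t - a * t ^ 2 ≠ 0) :
    HasDerivAt (modelPhase a ξ) (ξ / (2 * t - a * t ^ 2)) t := by
  have ht : t ≠ 0 := by rintro rfl; simp at hr
  have ht' : 2 - a * t ≠ 0 := fun h => hr (by linear_combination t * h)
  refine (((hasDerivAt_log ht).sub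
    ((((hasDerivAt_id' t).const_mul a).const_sub 2).log ht')).const_mul (ξ / 2)).congr_deriv ?_
  rw [show 2 * t - a * t ^ 2 = t * (2 - a * t) by ring]
  generalize hw : 2 - a * t = w at ht' ⊢
  field_simp
  linear_combination -ξ * hw

lemma hasDerivAt_sqrt_two_mul_sub_mul_sq (hr : 0 < 2 * t - a * t ^ 2) :
    HasDerivAt (fun t => √(2 * t - a * t ^ 2)) ((1 - a * t) / √(2 * t - a * t ^ 2)) t := by
  have hw : HasDerivAt (fun t => 2 * t - a * t ^ 2) (2 - 2 * a * t) t :=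
    (((hasDerivAt_id t).const_mul 2).sub ((hasDerivAt_pow 2 t).const_mul a)).congr_deriv
      (by simp; ring)
  refine (hw.sqrt hr.ne').congr_deriv ?_
  have := (sqrt_pos.2 hr).ne'
  field_simp

lemma hasDerivAt_modelSol (hr : 0 < 2 * t - a * t ^ 2) :
    HasDerivAt (modelSol a ξ) (modelSolDeriv a ξ t) t := by
  refine ((hasDerivAt_sqrt_two_mul_sub_mul_sq hr).mul
    (hasDerivAt_modelPhase (ξ := ξ) hr.ne').cos).congr_deriv ?_
  have hs := sq_sqrt hr.le
  have hs' := (sqrt_pos.2 hr).ne'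
  simp only [modelSolDeriv]
  generalize √(2 * t - a * t ^ 2) = s at hs hs' ⊢
  generalize 2 * t - a * t ^ 2 = r at hs ⊢
  subst hs
  field_simp
  ring

lemma hasDerivAt_modelSolDeriv (hr : 0 < 2 * t - a * t ^ 2) :
    HasDerivAt (modelSolDeriv a ξ)
      (-((1 + ξ ^ 2) * ((2 * t - a * t ^ 2) ^ 2)⁻¹ * modelSol a ξ t)) t := by
  have hθ := hasDerivAt_modelPhase (ξ := ξ) hr.ne'
  have hs' := (sqrt_pos.2 hr).ne'
  set θ := modelPhase a ξ
  have hw : HasDerivAt (fun t => (1 - a * t) * cos (θ t) - ξ * sin (θ t))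
      (-a * cos (θ t) + (1 - a * t) * (-sin (θ t) * (ξ / (2 * t - a * t ^ 2)))
        - ξ * (cos (θ t) * (ξ / (2 * t - a * t ^ 2)))) t :=
    (((((hasDerivAt_id' t).const_mul a).const_sub 1).mul hθ.cos).sub
      (hθ.sin.const_mul ξ)).congr_deriv (by ring)
  refine (((hasDerivAt_sqrt_two_mul_sub_mul_sq hr).inv hs').mul hw).congr_deriv ?_
  have hs := sq_sqrt hr.le
  simp only [modelSol, Pi.inv_apply]
  generalize √(2 * t - a * t ^ 2) = s at hs hs' ⊢
  generalize hr_def : 2 * t - a * t ^ 2 = r at hs ⊢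
  subst hs
  field_simp
  linear_combination a * cos (θ t) * hr_def

lemma deriv_deriv_modelSol (hr : 0 < 2 * t - a * t ^ 2) :
    deriv (deriv (modelSol a ξ)) t =
      -((1 + ξ ^ 2) * ((2 * t - a * t ^ 2) ^ 2)⁻¹ * modelSol a ξ t) := by
  have hev : deriv (modelSol a ξ) =ᶠ[𝓝 t] modelSolDeriv a ξ := by
    have hopen : IsOpen {s : ℝ | 0 < 2 * s - a * s ^ 2} := isOpen_lt continuous_const (by fun_prop)
    filter_upwards [hopen.mem_nhds hr] with s hs
    exact (hasDerivAt_modelSol hs).deriv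
  rw [hev.deriv_eq, (hasDerivAt_modelSolDeriv hr).deriv]

lemma tendsto_modelPhase_atBot (hξ : 0 < ξ) : Tendsto (modelPhase a ξ) (𝓝[>] 0) atBot := by
  have hlog : Tendsto (fun t => log (2 - a * t)) (𝓝[>] 0) (𝓝 (log (2 - a * 0))) :=
    ((continuousAt_const.sub (continuousAt_const.mul continuousAt_id)).log
      (by norm_num)).tendsto.mono_left nhdsWithin_le_nhds
  exact ((tendsto_log_nhdsGT_zero.atBot_add hlog.neg).const_mul_atBot (half_pos hξ)).congr
    fun t => by rw [modelPhase, sub_eq_add_neg (log t)]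

lemma exists_modelPhase_cos_sin_eq (ha : 0 < a) (hξ : 0 < ξ) (hδ : δ ∈ Ioo 0 (2 / a)) (x : ℝ) :
    ∃ t ∈ Ioo 0 δ, cos (modelPhase a ξ t) = cos x ∧ sin (modelPhase a ξ t) = sin x :=
  exists_mem_Ioo_cos_sin_eq_of_tendsto_atBot hδ.1
    (fun _ ht => (hasDerivAt_modelPhase (two_mul_sub_mul_sq_pos ha
      ⟨ht.1, ht.2.trans_lt hδ.2⟩).ne').continuousAt.continuousWithinAt)
    (tendsto_modelPhase_atBot hξ) x

lemma exists_modelSol_pos (ha : 0 < a) (hξ : 0 < ξ) (hδ : δ ∈ Ioo 0 (2 / a)) :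
    ∃ t ∈ Ioo 0 δ, 0 < modelSol a ξ t := by
  obtain ⟨t, ht, hcos, -⟩ := exists_modelPhase_cos_sin_eq ha hξ hδ 0
  refine ⟨t, ht, ?_⟩
  rw [modelSol, hcos, cos_zero, mul_one]
  exact sqrt_pos.2 (two_mul_sub_mul_sq_pos ha ⟨ht.1, ht.2.trans hδ.2⟩)

lemma exists_modelSol_eq_zero_modelSolDeriv_neg (ha : 0 < a) (hξ : 0 < ξ)
    (hδ : δ ∈ Ioo 0 (2 / a)) : ∃ t ∈ Ioo 0 δ, modelSol a ξ t = 0 ∧ modelSolDeriv a ξ t < 0 := by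
  obtain ⟨t, ht, hcos, hsin⟩ := exists_modelPhase_cos_sin_eq ha hξ hδ (π / 2)
  have hs := sqrt_pos.2 (two_mul_sub_mul_sq_pos ha ⟨ht.1, ht.2.trans hδ.2⟩)
  refine ⟨t, ht, by rw [modelSol, hcos, cos_pi_div_two, mul_zero], ?_⟩
  rw [modelSolDeriv, hcos, hsin, cos_pi_div_two, sin_pi_div_two, mul_zero, zero_sub, mul_one]
  exact mul_neg_of_pos_of_neg (inv_pos.2 hs) (neg_neg_of_pos hξ)

lemma exists_modelSol_eq_zero_modelSolDeriv_pos (ha : 0 < a) (hξ : 0 < ξ)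
    (hδ : δ ∈ Ioo 0 (2 / a)) : ∃ t ∈ Ioo 0 δ, modelSol a ξ t = 0 ∧ 0 < modelSolDeriv a ξ t := by
  obtain ⟨t, ht, hcos, hsin⟩ := exists_modelPhase_cos_sin_eq ha hξ hδ (-(π / 2))
  have hs := sqrt_pos.2 (two_mul_sub_mul_sq_pos ha ⟨ht.1, ht.2.trans hδ.2⟩)
  refine ⟨t, ht, by rw [modelSol, hcos, cos_neg, cos_pi_div_two, mul_zero], ?_⟩
  rw [modelSolDeriv, hcos, hsin, cos_neg, sin_neg, cos_pi_div_two, sin_pi_div_two, mul_zero,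
    zero_sub, mul_neg_one, neg_neg]
  exact mul_pos (inv_pos.2 hs) hξ

end Model

theorem oscillation_and_no_positive_solution
    (a lam ε : ℝ) (ha : 0 < a) (hlam : 1 < lam) (hε : ε ∈ Ioo (0 : ℝ) (2 / a)) :
    (∃ y : ℝ → ℝ,
      (∀ t ∈ Ioo (0 : ℝ) ε,
        deriv (deriv y) t = -(lam * ((2 * t - a * t ^ 2) ^ 2)⁻¹ * y t)) ∧
      (∃ t ∈ Ioo (0 : ℝ) ε, y t ≠ 0) ∧
      (∀ δ ∈ Ioo (0 : ℝ) ε, ∃ t ∈ Ioo (0 : ℝ) δ, y t = 0)) ∧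
    ¬ ∃ y : ℝ → ℝ,
      (∀ t ∈ Ioo (0 : ℝ) ε,
        deriv (deriv y) t = -(lam * ((2 * t - a * t ^ 2) ^ 2)⁻¹ * y t)) ∧
      (∀ t ∈ Ioo (0 : ℝ) ε, 0 < y t) := by
  obtain ⟨ξ, hξ, rfl⟩ : ∃ ξ, 0 < ξ ∧ lam = 1 + ξ ^ 2 :=
    ⟨√(lam - 1), sqrt_pos.2 (by linarith), by rw [sq_sqrt (by linarith)]; ring⟩
  have hr : ∀ t ∈ Ioo 0 ε, 0 < 2 * t - a * t ^ 2 := fun t ht =>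
    two_mul_sub_mul_sq_pos ha ⟨ht.1, ht.2.trans hε.2⟩
  refine ⟨⟨modelSol a ξ, fun t ht => deriv_deriv_modelSol (hr t ht), ?_, fun δ hδ => ?_⟩, ?_⟩
  · obtain ⟨t, ht, hpos⟩ := exists_modelSol_pos ha hξ hε
    exact ⟨t, ht, hpos.ne'⟩
  · obtain ⟨t, ht, hzero, -⟩ := exists_modelSol_eq_zero_modelSolDeriv_neg ha hξ
      ⟨hδ.1, hδ.2.trans hε.2⟩
    exact ⟨t, ht, hzero⟩
  rintro ⟨y, hy, hpos⟩
  have hy_neg : ∀ t ∈ Ioo 0 ε, deriv (deriv y) t < 0 := fun t ht => by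
    have := hr t ht
    have := hpos t ht
    rw [hy t ht]
    exact neg_neg_of_pos (by positivity)
  obtain ⟨m, hm, hdiff⟩ := exists_forall_differentiableAt_of_deriv_deriv_neg hε.1 hy_neg
  have hsub : Ioo 0 m ⊆ Ioo 0 ε := Ioo_subset_Ioo_right hm.2
  obtain ⟨t₁, ht₁, hu₁, hu'₁⟩ :=
    exists_modelSol_eq_zero_modelSolDeriv_neg ha hξ ⟨hm.1, hm.2.trans_lt hε.2⟩
  obtain ⟨t₂, ht₂, hu₂, hu'₂⟩ :=
    exists_modelSol_eq_zero_modelSolDeriv_pos ha hξ ⟨hm.1, hm.2.trans_lt hε.2⟩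
  refine (sturm_nonpos_of_pos isOpen_Ioo isPreconnected_Ioo
    (fun t ht => hasDerivAt_modelSol (hr t (hsub ht)))
    (fun t ht => hasDerivAt_modelSolDeriv (hr t (hsub ht)))
    (fun t ht => (hdiff t ht).hasDerivAt) (fun t ht => ?_)
    ht₁ ht₂ hu₁ hu₂ hu'₁ hu'₂ (hpos t₁ (hsub ht₁))).not_gt (hpos t₂ (hsub ht₂))
  rw [← hy t (hsub ht)]
  exact (differentiableAt_of_deriv_ne_zero (hy_neg t (hsub ht)).ne).hasDerivAt
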